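/- The involution σ(w) = (−w_1/w_n, ..., −w_{n-1}/w_n, 1/w_n) is a holomorphic automorphism of H^n satisfying σ ∘ σ = id and σ(0,...,0,1) = (0,...,0,1), and its pushforwards of the basic vector fields satisfy: σ_*(T) = −2i w_n (D − w_n ∂/∂w_n), σ_*(T^{2,k}) = 2w_k(D − w_n ∂/∂w_n) − w_n ∂/∂w_k, σ_*(T^{3,k}) = −2i w_k(D − w_n ∂/∂w_n) − i w_n ∂/∂w_k. -/

import Mathlib

open Complex

/-- ρ(w) = Re w_n − |w'|². -/
noncomputable def rho {n : ℕ} (w : Fin (n+1) → ℂ) : ℝ :=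
  (w (Fin.last n)).re - ∑ i : Fin n, ‖w i.castSucc‖ ^ 2

/-- The involution σ(w) = (−w'/w_n, 1/w_n). -/
noncomputable def sigmaInv {n : ℕ} (w : Fin (n+1) → ℂ) : Fin (n+1) → ℂ :=
  fun i => if i = Fin.last n then 1 / w (Fin.last n) else - w i / w (Fin.last n)

/-- Coefficients of T = 2i ∂/∂w_n. -/
def Tv {n : ℕ} (w : Fin (n+1) → ℂ) (i : Fin (n+1)) : ℂ :=
  if i = Fin.last n then 2 * Complex.I else 0

/-- Coefficients of T^{2,k} = 2w_k ∂/∂w_n + ∂/∂w_k. -/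
def T2v {n : ℕ} (k : Fin n) (w : Fin (n+1) → ℂ) (i : Fin (n+1)) : ℂ :=
  if i = Fin.last n then 2 * w k.castSucc else if i = k.castSucc then 1 else 0

/-- Coefficients of T^{3,k} = −2i w_k ∂/∂w_n + i ∂/∂w_k. -/
def T3v {n : ℕ} (k : Fin n) (w : Fin (n+1) → ℂ) (i : Fin (n+1)) : ℂ :=
  if i = Fin.last n then -2 * Complex.I * w k.castSucc
  else if i = k.castSucc then Complex.I else 0

/-- Coefficients of D − w_n ∂/∂w_n (= Σ_k w_k ∂/∂w_k + w_n ∂/∂w_n). -/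
def DEv {n : ℕ} (v : Fin (n+1) → ℂ) (i : Fin (n+1)) : ℂ := v i

/-- Coefficients of T̃ = −2i w_n (D − w_n ∂/∂w_n). -/
def Ttil {n : ℕ} (v : Fin (n+1) → ℂ) (i : Fin (n+1)) : ℂ :=
  -2 * Complex.I * v (Fin.last n) * DEv v i

/-- Coefficients of T̃^{2,k} = 2w_k(D − w_n ∂/∂w_n) − w_n ∂/∂w_k. -/
def T2til {n : ℕ} (k : Fin n) (v : Fin (n+1) → ℂ) (i : Fin (n+1)) : ℂ :=
  2 * v k.castSucc * DEv v i - (if i = k.castSucc then v (Fin.last n) else 0)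

/-- Coefficients of T̃^{3,k} = −2i w_k(D − w_n ∂/∂w_n) − i w_n ∂/∂w_k. -/
def T3til {n : ℕ} (k : Fin n) (v : Fin (n+1) → ℂ) (i : Fin (n+1)) : ℂ :=
  -2 * Complex.I * v k.castSucc * DEv v i -
    Complex.I * (if i = k.castSucc then v (Fin.last n) else 0)

/-! The map σ(w) = (−w'/w_n, 1/w_n) rescales the defining function, ρ(σ w) = ρ(w) / |w_n|², so
it maps H to itself, and it is visibly its own inverse. Writing z = σ(w), its differential is
dσ_w(v)_n = −z_n² v_n and dσ_w(v)_i = −z_n (v_i + z_i v_n) for i < n; substituting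
w_n = 1/z_n and w_k = −z_k/z_n, each pushforward formula becomes a polynomial identity in z. -/

variable {n : ℕ}

lemma last_ne_zero_of_rho_pos {w : Fin (n+1) → ℂ} (h : 0 < rho w) : w (Fin.last n) ≠ 0 := by
  intro h0
  have : rho w ≤ 0 := by
    simpa [rho, h0] using Finset.sum_nonneg fun (i : Fin n) _ => sq_nonneg ‖w i.castSucc‖
  linarith

lemma rho_sigmaInv (w : Fin (n+1) → ℂ) :
    rho (sigmaInv w) = rho w / normSq (w (Fin.last n)) := by
  simp only [rho, sigmaInv, ↓reduceIte, if_neg (Fin.castSucc_lt_last _).ne, one_div, inv_re,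
    norm_div, norm_neg, div_pow, Complex.sq_norm, ← Finset.sum_div, sub_div]

lemma sigmaInv_sigmaInv {w : Fin (n+1) → ℂ} (hw : w (Fin.last n) ≠ 0) :
    sigmaInv (sigmaInv w) = w := by
  funext i
  by_cases hi : i = Fin.last n
  · simp [sigmaInv, hi]
  · simp only [sigmaInv, if_neg hi, ↓reduceIte]
    field_simp

lemma mapsTo_sigmaInv : Set.MapsTo (sigmaInv (n := n)) {w | 0 < rho w} {w | 0 < rho w} :=
  fun w hw => by
    rw [Set.mem_ofPred_eq, rho_sigmaInv]
    exact div_pos hw (normSq_pos.2 (last_ne_zero_of_rho_pos hw))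

lemma bijOn_sigmaInv : Set.BijOn (sigmaInv (n := n)) {w | 0 < rho w} {w | 0 < rho w} :=
  have hinv : Set.LeftInvOn sigmaInv sigmaInv {w : Fin (n+1) → ℂ | 0 < rho w} :=
    fun _ hw => sigmaInv_sigmaInv (last_ne_zero_of_rho_pos hw)
  Set.InvOn.bijOn ⟨hinv, hinv⟩ mapsTo_sigmaInv mapsTo_sigmaInv

open ContinuousLinearMap in
noncomputable def sigmaDeriv (w : Fin (n+1) → ℂ) : (Fin (n+1) → ℂ) →L[ℂ] (Fin (n+1) → ℂ) :=
  pi fun i => if i = Fin.last n then -sigmaInv w (Fin.last n) ^ 2 • proj (Fin.last n)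
    else -sigmaInv w (Fin.last n) • (proj i + sigmaInv w i • proj (Fin.last n))

lemma sigmaDeriv_apply (w v : Fin (n+1) → ℂ) (i : Fin (n+1)) :
    sigmaDeriv w v i = if i = Fin.last n then -sigmaInv w (Fin.last n) ^ 2 * v (Fin.last n)
      else -sigmaInv w (Fin.last n) * (v i + sigmaInv w i * v (Fin.last n)) := by
  by_cases hi : i = Fin.last n <;> simp [sigmaDeriv, hi, mul_add]

lemma hasFDerivAt_sigmaInv {w : Fin (n+1) → ℂ} (hw : w (Fin.last n) ≠ 0) :
    HasFDerivAt sigmaInv (sigmaDeriv w) w := by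
  have hinv := (hasDerivAt_inv hw).comp_hasFDerivAt w (hasFDerivAt_apply (𝕜 := ℂ) (Fin.last n) w)
  refine hasFDerivAt_pi'' fun i => ?_
  by_cases hi : i = Fin.last n
  · subst hi
    simp only [sigmaInv, ↓reduceIte, one_div]
    refine hinv.congr_fderiv (ContinuousLinearMap.ext fun v => ?_)
    simp [sigmaDeriv_apply, sigmaInv]
  · simp only [sigmaInv, if_neg hi, div_eq_mul_inv]
    refine ((hasFDerivAt_apply i w).neg.mul hinv).congr_fderiv (ContinuousLinearMap.ext fun v => ?_)
    simp [sigmaDeriv_apply, sigmaInv, hi]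
    field_simp
    ring

lemma fderiv_sigmaInv_Tv {w : Fin (n+1) → ℂ} (hw : w (Fin.last n) ≠ 0) :
    fderiv ℂ sigmaInv w (Tv w) = Ttil (sigmaInv w) := by
  funext i
  rw [(hasFDerivAt_sigmaInv hw).fderiv, sigmaDeriv_apply]
  by_cases hi : i = Fin.last n <;> simp [Tv, Ttil, DEv, hi] <;> ring

lemma fderiv_sigmaInv_T2v {w : Fin (n+1) → ℂ} (hw : w (Fin.last n) ≠ 0) (k : Fin n) :
    fderiv ℂ sigmaInv w (T2v k w) = T2til k (sigmaInv w) := by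
  have hk := (Fin.castSucc_lt_last k).ne
  funext i
  rw [(hasFDerivAt_sigmaInv hw).fderiv, sigmaDeriv_apply]
  rcases eq_or_ne i (Fin.last n) with rfl | hi
  · simp [T2v, T2til, DEv, sigmaInv, hk.symm]
    field_simp
  rcases eq_or_ne i k.castSucc with rfl | hik
  · simp [T2v, T2til, DEv, sigmaInv, hk]
    field_simp
    ring
  · simp [T2v, T2til, DEv, sigmaInv, hi, hk, hik]
    field_simp

lemma fderiv_sigmaInv_T3v {w : Fin (n+1) → ℂ} (hw : w (Fin.last n) ≠ 0) (k : Fin n) :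
    fderiv ℂ sigmaInv w (T3v k w) = T3til k (sigmaInv w) := by
  have hk := (Fin.castSucc_lt_last k).ne
  funext i
  rw [(hasFDerivAt_sigmaInv hw).fderiv, sigmaDeriv_apply]
  rcases eq_or_ne i (Fin.last n) with rfl | hi
  · simp [T3v, T3til, DEv, sigmaInv, hk.symm]
    field_simp
  rcases eq_or_ne i k.castSucc with rfl | hik
  · simp [T3v, T3til, DEv, sigmaInv, hk]
    field_simp
    ring
  · simp [T3v, T3til, DEv, sigmaInv, hi, hk, hik]
    field_simp

/-- σ is a holomorphic automorphism of the Siegel domain H with σ∘σ = id,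
fixing (0,…,0,1), and its pushforwards satisfy σ_*(T) = T̃, σ_*(T^{2,k}) = T̃^{2,k},
σ_*(T^{3,k}) = T̃^{3,k}. -/
theorem sigma_involution (n : ℕ) (H : Set (Fin (n+1) → ℂ)) (hH : H = {w | 0 < rho w}) :
    Set.BijOn (sigmaInv (n := n)) H H ∧
    DifferentiableOn ℂ (sigmaInv (n := n)) H ∧
    (∀ w ∈ H, sigmaInv (sigmaInv w) = w) ∧
    sigmaInv (fun i => if i = Fin.last n then 1 else 0)
      = (fun i => if i = Fin.last n then 1 else 0) ∧
    (∀ w ∈ H, fderiv ℂ (sigmaInv (n := n)) w (Tv w) = Ttil (sigmaInv w)) ∧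
    (∀ w ∈ H, ∀ k : Fin n,
      fderiv ℂ (sigmaInv (n := n)) w (T2v k w) = T2til k (sigmaInv w)) ∧
    (∀ w ∈ H, ∀ k : Fin n,
      fderiv ℂ (sigmaInv (n := n)) w (T3v k w) = T3til k (sigmaInv w)) := by
  subst hH
  have hw : ∀ w ∈ {w : Fin (n+1) → ℂ | 0 < rho w}, w (Fin.last n) ≠ 0 :=
    fun _ => last_ne_zero_of_rho_pos
  refine ⟨bijOn_sigmaInv,
    fun w h => (hasFDerivAt_sigmaInv (hw w h)).differentiableAt.differentiableWithinAt,
    fun w h => sigmaInv_sigmaInv (hw w h), ?_,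
    fun w h => fderiv_sigmaInv_Tv (hw w h),
    fun w h => fderiv_sigmaInv_T2v (hw w h),
    fun w h => fderiv_sigmaInv_T3v (hw w h)⟩
  funext i
  by_cases hi : i = Fin.last n <;> simp [sigmaInv, hi]
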